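/- arXiv:math/0510605 — 4 statements merged into one kernel-verified Lean document; each statement's English description precedes it below -/
import Mathlib

section
/- Let (X_z)_{z∈ℤ²} be independent, identically distributed nonnegative random variables with E(e^{c X_0}) < ∞ for some constant c > 0. Then there exist constants b1, b2 > 0 such that for every integer s ≥ 1, P(M_s(X) > b1·s) ≤ e^{−b2·s}. -/
open MeasureTheory ProbabilityTheory

/-- Nearest-neighbor adjacency on `ℤ²`: `z` and `w` are at `ℓ¹`-distance `1`. -/
def LatAdj (z w : ℤ × ℤ) : Prop := (z.1 - w.1).natAbs + (z.2 - w.2).natAbs = 1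

/-- A lattice animal: a finite subset of `ℤ²` containing the origin and connected
with respect to nearest-neighbor adjacency. -/
def IsLatticeAnimal (A : Finset (ℤ × ℤ)) : Prop :=
  (0, 0) ∈ A ∧
    ∀ z ∈ A, Relation.ReflTransGen (fun a b => LatAdj a b ∧ a ∈ A ∧ b ∈ A) (0, 0) z

/-!
A lattice animal `A` with `#A ≤ s` is the site set of a nearest-neighbour walk from the origin
with `2 * s` steps, some of them null: a walk through part of `A` reaches one more site `v`,
adjacent to a visited site `u`, by the detour `u → v → u`, at the cost of two steps. So there
are at most `5 ^ (2 * s) = 25 ^ s` animals with at most `s` sites. For a fixed `A`, the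
exponential Chebyshev inequality and independence give
`P(∑_{z ∈ A} X_z > b s) ≤ e^{-c b s} m ^ s` with `m = E e^{c X₀} ≥ 1`, and the union bound
over all animals with `c b = log (25 m) + 1` leaves `e^{-s}`.
-/

open Finset Relation Real

theorem Relation.ReflTransGen.exists_rel_mem_notMem {α : Type*} {r : α → α → Prop} {s : Set α}
    {a b : α} (h : ReflTransGen r a b) (ha : a ∈ s) (hb : b ∉ s) :
    ∃ u ∈ s, ∃ v ∉ s, r u v := by
  induction h with
  | refl => exact absurd ha hb
  | @tail c d _ hcd ih =>
    by_cases hc : c ∈ s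
    · exact ⟨c, hc, d, hb, hcd⟩
    · exact ih hc

section Detour

variable {α : Type*} [DecidableEq α] {r : α → α → Prop} [Std.Symm r]

theorem List.IsChain.exists_detour {l : List α} (hl : l.IsChain r) {u v : α}
    (hu : u ∈ l) (huv : r u v) :
    ∃ l' : List α, l'.IsChain r ∧ l'.head? = l.head? ∧ l'.toFinset = insert v l.toFinset ∧
      l'.length = l.length + 2 := by
  obtain ⟨p, q, rfl⟩ := List.append_of_mem hu
  refine ⟨p ++ u :: v :: u :: q, ?_, ?_, ?_, by simp; omega⟩
  · obtain ⟨hp, hq⟩ := List.isChain_split.mp hl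
    exact List.isChain_split.mpr ⟨hp, List.isChain_cons_cons.mpr
      ⟨huv, List.isChain_cons_cons.mpr ⟨symm huv, hq⟩⟩⟩
  · cases p <;> rfl
  · ext x; simp only [List.mem_toFinset, List.mem_append, List.mem_cons, Finset.mem_insert]; tauto

theorem exists_isChain_toFinset_eq {A : Finset α} {a : α} (ha : a ∈ A)
    (hconn : ∀ z ∈ A, ReflTransGen (fun x y => r x y ∧ x ∈ A ∧ y ∈ A) a z) :
    ∃ l : List α, l.IsChain r ∧ l.head? = some a ∧ l.toFinset = A ∧ l.length + 1 ≤ 2 * #A := by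
  suffices h : ∀ k, 1 ≤ k → k ≤ #A → ∃ l : List α, l.IsChain r ∧ l.head? = some a ∧
      l.toFinset ⊆ A ∧ #l.toFinset = k ∧ l.length + 1 = 2 * k by
    obtain ⟨l, hl, hhead, hsub, hcard, hlen⟩ := h #A (card_pos.mpr ⟨a, ha⟩) le_rfl
    exact ⟨l, hl, hhead, eq_of_subset_of_card_le hsub hcard.ge, hlen.le⟩
  intro k hk
  induction k, hk using Nat.le_induction with
  | base => exact fun _ => ⟨[a], List.IsChain.singleton a, rfl, by simpa using ha, rfl, rfl⟩
  | succ k _ ih =>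
    intro hkA
    obtain ⟨l, hl, hhead, hsub, hcard, hlen⟩ := ih (by omega)
    obtain ⟨z, hzA, hzl⟩ : ∃ z ∈ A, z ∉ l.toFinset :=
      not_subset.mp fun h => by have := card_le_card h; omega
    have hal : a ∈ l.toFinset := List.mem_toFinset.mpr (List.mem_of_mem_head? hhead)
    obtain ⟨u, hu, v, hv, huv, -, hvA⟩ :=
      (hconn z hzA).exists_rel_mem_notMem (s := l.toFinset) hal hzl
    obtain ⟨l', hl', hhead', hset', hlen'⟩ := hl.exists_detour (List.mem_toFinset.mp hu) huv
    refine ⟨l', hl', hhead'.trans hhead, ?_, ?_, by omega⟩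
    · rw [hset']; exact insert_subset hvA hsub
    · rw [hset', card_insert_of_notMem hv, hcard]

end Detour

instance : Std.Symm LatAdj where
  symm _ _ h := by unfold LatAdj at *; omega

/-- The null step `4` pads walks to a fixed length. -/
def latticeStep : Fin 5 → ℤ × ℤ := ![(1, 0), (-1, 0), (0, 1), (0, -1), (0, 0)]

def walkSites (a : ℤ × ℤ) (w : List (Fin 5)) : Finset (ℤ × ℤ) :=
  (w.scanl (fun p i => p + latticeStep i) a).toFinset

theorem walkSites_cons (a : ℤ × ℤ) (i : Fin 5) (w : List (Fin 5)) :
    walkSites a (i :: w) = insert a (walkSites (a + latticeStep i) w) := by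
  simp [walkSites]

theorem walkSites_replicate_four (a : ℤ × ℤ) (n : ℕ) :
    walkSites a (List.replicate n 4) = {a} := by
  induction n with
  | zero => rfl
  | succ n ih =>
    rw [List.replicate_succ, walkSites_cons, show latticeStep 4 = 0 from rfl, add_zero, ih,
      insert_eq_self.mpr (mem_singleton_self a)]

theorem LatAdj.exists_latticeStep {a b : ℤ × ℤ} (h : LatAdj a b) : ∃ i, b = a + latticeStep i := by
  unfold LatAdj at h
  obtain ⟨a₁, a₂⟩ := a
  obtain ⟨b₁, b₂⟩ := b
  have : (b₁ = a₁ + 1 ∧ b₂ = a₂) ∨ (b₁ = a₁ - 1 ∧ b₂ = a₂) ∨ (b₁ = a₁ ∧ b₂ = a₂ + 1) ∨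
      (b₁ = a₁ ∧ b₂ = a₂ - 1) := by omega
  rcases this with ⟨rfl, rfl⟩ | ⟨rfl, rfl⟩ | ⟨rfl, rfl⟩ | ⟨rfl, rfl⟩
  exacts [⟨0, by simp [latticeStep]⟩, ⟨1, by simp [latticeStep]; ring⟩, ⟨2, by simp [latticeStep]⟩,
    ⟨3, by simp [latticeStep]; ring⟩]

theorem exists_walkSites_eq_of_isChain :
    ∀ {a : ℤ × ℤ} {t : List (ℤ × ℤ)}, (a :: t).IsChain LatAdj →
    ∀ n, t.length ≤ n → ∃ w : List (Fin 5), w.length = n ∧ walkSites a w = (a :: t).toFinset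
  | a, [], _, n, _ => ⟨List.replicate n 4, by simp, by simp [walkSites_replicate_four]⟩
  | a, b :: t, h, n, hn => by
    obtain ⟨hab, ht⟩ := List.isChain_cons_cons.mp h
    obtain ⟨i, rfl⟩ := hab.exists_latticeStep
    obtain ⟨n, rfl⟩ : ∃ n', n = n' + 1 := Nat.exists_eq_add_one.mpr (by simp at hn; omega)
    obtain ⟨w, hw, hsites⟩ := exists_walkSites_eq_of_isChain ht n (by simpa using hn)
    exact ⟨i :: w, by simp [hw], by simp [walkSites_cons, hsites]⟩

theorem IsLatticeAnimal.exists_walkSites_eq {A : Finset (ℤ × ℤ)} (hA : IsLatticeAnimal A) {s : ℕ}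
    (hs : #A ≤ s) :
    ∃ w : List (Fin 5), w.length = 2 * s ∧ walkSites (0, 0) w = A := by
  obtain ⟨l, hl, hhead, hsites, hlen⟩ := exists_isChain_toFinset_eq hA.1 hA.2
  obtain ⟨t, rfl⟩ : ∃ t, l = (0, 0) :: t := List.head?_eq_some_iff.mp hhead
  obtain ⟨w, hw, hwsites⟩ := exists_walkSites_eq_of_isChain hl (2 * s) (by simp at hlen; omega)
  exact ⟨w, hw, hwsites.trans hsites⟩

open Classical in
noncomputable def latticeAnimals (s : ℕ) : Finset (Finset (ℤ × ℤ)) :=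
  ((univ : Finset (List.Vector (Fin 5) (2 * s))).image fun w => walkSites (0, 0) w.1).filter
    fun A => IsLatticeAnimal A ∧ #A ≤ s

theorem mem_latticeAnimals {s : ℕ} {A : Finset (ℤ × ℤ)} :
    A ∈ latticeAnimals s ↔ IsLatticeAnimal A ∧ #A ≤ s := by
  classical
  refine ⟨fun h => (mem_filter.mp h).2, fun h => mem_filter.mpr ⟨?_, h⟩⟩
  obtain ⟨w, hw, hsites⟩ := h.1.exists_walkSites_eq h.2
  exact mem_image.mpr ⟨⟨w, hw⟩, mem_univ _, hsites⟩

theorem card_latticeAnimals_le (s : ℕ) : #(latticeAnimals s) ≤ 25 ^ s := by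
  classical
  calc #(latticeAnimals s) ≤ #(univ : Finset (List.Vector (Fin 5) (2 * s))) :=
        (card_filter_le _ _).trans card_image_le
    _ = 25 ^ s := by rw [card_univ, card_vector, Fintype.card_fin, pow_mul]; norm_num

theorem one_le_mgf_of_nonneg {Ω : Type*} [MeasurableSpace Ω] {μ : Measure Ω}
    [IsProbabilityMeasure μ] {Y : Ω → ℝ} (hY : ∀ ω, 0 ≤ Y ω) {t : ℝ} (ht : 0 ≤ t)
    (hint : Integrable (fun ω => exp (t * Y ω)) μ) : 1 ≤ mgf Y μ t :=
  calc 1 = mgf (fun _ => (0 : ℝ)) μ t := by simp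
    _ ≤ mgf Y μ t := mgf_mono_of_nonneg (ae_of_all _ hY) ht hint

theorem ProbabilityTheory.iIndepFun.measureReal_lt_sum_le {ι Ω : Type*} [MeasurableSpace Ω]
    {μ : Measure Ω} [IsProbabilityMeasure μ] {X : ι → Ω → ℝ} {i₀ : ι} {t : ℝ}
    (hindep : iIndepFun X μ) (hmeas : ∀ i, Measurable (X i))
    (hident : ∀ i, IdentDistrib (X i) (X i₀) μ μ) (ht : 0 ≤ t)
    (hint : Integrable (fun ω => exp (t * X i₀ ω)) μ) (s : Finset ι) (a : ℝ) :
    μ.real {ω | a < ∑ i ∈ s, X i ω} ≤ exp (-t * a) * mgf (X i₀) μ t ^ #s := by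
  have hint_i : ∀ i, Integrable (fun ω => exp (t * X i ω)) μ := fun i =>
    ((hident i).comp (measurable_const_mul t).exp).integrable_iff.mpr hint
  calc μ.real {ω | a < ∑ i ∈ s, X i ω}
      ≤ μ.real {ω | a ≤ (∑ i ∈ s, X i) ω} :=
        measureReal_mono fun ω hω => by simpa using le_of_lt hω
    _ ≤ exp (-t * a) * mgf (∑ i ∈ s, X i) μ t :=
        measure_ge_le_exp_mul_mgf a ht (hindep.integrable_exp_mul_sum hmeas fun i _ => hint_i i)
    _ = exp (-t * a) * mgf (X i₀) μ t ^ #s := by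
        rw [hindep.mgf_sum hmeas,
          prod_eq_pow_card fun i _ => mgf_congr_of_identDistrib _ _ (hident i) t]

/-- If `(X_z)_{z ∈ ℤ²}` are i.i.d. nonnegative random variables with
`E(e^{c X₀}) < ∞` for some `c > 0`, then there are `b1, b2 > 0` such that for every `s ≥ 1`,
`P(M_s(X) > b1 s) ≤ e^{-b2 s}`, where `M_s(X)` is the maximal total weight of a lattice
animal with at most `s` sites. -/
theorem stmt1
    {Ω : Type*} [MeasurableSpace Ω] (μ : Measure Ω) [IsProbabilityMeasure μ]
    (X : ℤ × ℤ → Ω → ℝ)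
    (hmeas : ∀ z, Measurable (X z))
    (hindep : iIndepFun X μ)
    (hident : ∀ z, IdentDistrib (X z) (X (0, 0)) μ μ)
    (hnonneg : ∀ z ω, 0 ≤ X z ω)
    (hexp : ∃ c > 0, Integrable (fun ω => Real.exp (c * X (0, 0) ω)) μ) :
    ∃ b1 > 0, ∃ b2 > 0, ∀ s : ℕ, 1 ≤ s →
      μ {ω | ∃ A : Finset (ℤ × ℤ), IsLatticeAnimal A ∧ A.card ≤ s ∧
          b1 * s < ∑ z ∈ A, X z ω} ≤ ENNReal.ofReal (Real.exp (-b2 * s)) := by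
  obtain ⟨c, hc, hint⟩ := hexp
  set m := mgf (X (0, 0)) μ c
  have hm : 1 ≤ m := one_le_mgf_of_nonneg (hnonneg _) hc.le hint
  have hlog : 0 ≤ log (25 * m) := log_nonneg (by linarith)
  refine ⟨(log (25 * m) + 1) / c, by positivity, 1, one_pos, fun s _ => ?_⟩
  set b1 := (log (25 * m) + 1) / c
  rw [← ofReal_measureReal]
  refine ENNReal.ofReal_le_ofReal ?_
  calc μ.real {ω | ∃ A : Finset (ℤ × ℤ), IsLatticeAnimal A ∧ #A ≤ s ∧ b1 * s < ∑ z ∈ A, X z ω}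
      ≤ μ.real (⋃ A ∈ latticeAnimals s, {ω | b1 * s < ∑ z ∈ A, X z ω}) :=
        measureReal_mono (fun ω ⟨A, hA, hAs, hω⟩ =>
          Set.mem_biUnion (mem_latticeAnimals.mpr ⟨hA, hAs⟩) hω) (measure_ne_top _ _)
    _ ≤ ∑ A ∈ latticeAnimals s, μ.real {ω | b1 * s < ∑ z ∈ A, X z ω} :=
        measureReal_biUnion_finset_le _ _
    _ ≤ ∑ A ∈ latticeAnimals s, exp (-c * (b1 * s)) * m ^ s := by
        refine sum_le_sum fun A hA => ?_
        refine (hindep.measureReal_lt_sum_le hmeas hident hc.le hint A _).trans ?_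
        gcongr
        exact (mem_latticeAnimals.mp hA).2
    _ ≤ 25 ^ s * (exp (-c * (b1 * s)) * m ^ s) := by
        rw [sum_const, nsmul_eq_mul]
        gcongr
        exact_mod_cast card_latticeAnimals_le s
    _ = exp (-1 * s) := by
        rw [← mul_assoc, mul_comm _ (exp _), mul_assoc, ← mul_pow,
          ← exp_log (by positivity : 0 < 25 * m), ← exp_nat_mul, ← exp_add]
        congr 1
        have hcb1 : c * b1 = log (25 * m) + 1 := mul_div_cancel₀ _ hc.ne'
        linear_combination (-(s : ℝ)) * hcb1
end

section
/- For every integer l ≥ 1 there exists p0 ∈ (0,1) with the following property: for every p ∈ (p0, 1) and every integer k ≥ 1 there exist constants b3, b4 > 0 (depending only on l, k and p) such that for every l-dependent collection Y = (Y_z)_{z∈ℤ²} of {0,1}-valued random variables with inf_{z∈ℤ²} P(Y_z = 1) ≥ p, and for every integer s ≥ 1, one has P(m_s^k(Y) < b3·s) ≤ e^{−b4·s}. -/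
open MeasureTheory ProbabilityTheory

/-- The points of `B` are pairwise at `ℓ∞`-distance at least `k`. -/
def LinfSep (k : ℕ) (B : Finset (ℤ × ℤ)) : Prop :=
  ∀ z ∈ B, ∀ w ∈ B, z ≠ w → (k : ℤ) ≤ max |z.1 - w.1| |z.2 - w.2|

/-- `l`-dependence: the families `(Y_z)_{z ∈ A}` and `(Y_z)_{z ∈ B}` are independent whenever
the `ℓ∞`-distance between `A` and `B` is at least `l`. -/
def LDependent {Ω : Type} [MeasurableSpace Ω] (μ : Measure Ω) (l : ℕ)
    (Y : ℤ × ℤ → Ω → ℝ) : Prop :=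
  ∀ A B : Set (ℤ × ℤ),
    (∀ z ∈ A, ∀ w ∈ B, (l : ℤ) ≤ max |z.1 - w.1| |z.2 - w.2|) →
    IndepFun (fun ω (z : A) => Y z ω) (fun ω (w : B) => Y w ω) μ

/-!
If `m_s^k(Y) < b₃ s`, a witnessing lattice animal contains the trace `W` of a depth-first walk of
length `2(s-1)` from the origin with exactly `s` sites, and there are at most `16^s` such traces.
Greedily, the ones of `W` contain a `k`-separated set of at least a `(2k-1)⁻²` fraction of them, so
`W` carries fewer than `s / (2(2l-1)²)` ones. A greedy `l`-separated subset of `W` has at least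
`s / (2l-1)²` sites, so `Y` vanishes on an `l`-separated `C ⊆ W` with `2(2l-1)²|C| > s`. By
`l`-dependence this has probability at most `(1-p)^|C| ≤ 64^{-s}` once `1-p ≤ 64^{-2(2l-1)²}`,
and a union bound over the at most `16^s · 2^s` pairs `(W, C)` gives `2^{-s}`.
-/

open Finset

noncomputable section

lemma LatAdj.symm {a b : ℤ × ℤ} (h : LatAdj a b) : LatAdj b a := by
  unfold LatAdj at *; omega

def unitSteps : Finset (ℤ × ℤ) := {(1, 0), (-1, 0), (0, 1), (0, -1)}

lemma LatAdj.sub_mem_unitSteps {a b : ℤ × ℤ} (h : LatAdj a b) : b - a ∈ unitSteps := by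
  obtain ⟨a₁, a₂⟩ := a
  obtain ⟨b₁, b₂⟩ := b
  simp only [LatAdj] at h
  simp only [unitSteps, mem_insert, mem_singleton, Prod.mk_sub_mk, Prod.ext_iff]
  omega

/-- The walks of length `n` ending at the origin, as lists starting from their far end. -/
def latticeWalks : ℕ → Finset (List (ℤ × ℤ))
  | 0 => {[(0, 0)]}
  | n + 1 => (latticeWalks n).biUnion fun w => unitSteps.image fun u => (w.headD 0 + u) :: w

lemma card_latticeWalks_le (n : ℕ) : #(latticeWalks n) ≤ 4 ^ n := by
  induction n with
  | zero => rfl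
  | succ n ih =>
    rw [pow_succ]
    exact card_biUnion_le_card_mul _ _ _ (fun _ _ => card_image_le) |>.trans
      (Nat.mul_le_mul_right 4 ih)

lemma mem_latticeWalks {n : ℕ} {w : List (ℤ × ℤ)} (hw : w.IsChain LatAdj)
    (hlast : w.getLast? = some (0, 0)) (hlen : w.length = n + 1) : w ∈ latticeWalks n := by
  induction n generalizing w with
  | zero =>
    obtain ⟨a, rfl⟩ := List.length_eq_one_iff.1 hlen
    simp_all [latticeWalks]
  | succ n ih =>
    obtain ⟨a, b, w, rfl⟩ : ∃ a b w', w = a :: b :: w' := by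
      match w, hlen with
      | a :: b :: w', _ => exact ⟨a, b, w', rfl⟩
    rw [List.isChain_cons_cons] at hw
    simp only [latticeWalks, mem_biUnion, mem_image]
    refine ⟨b :: w, ih hw.2 (by simpa using hlast) (by simpa using hlen), a - b,
      hw.1.symm.sub_mem_unitSteps, by simp⟩

lemma IsLatticeAnimal.exists_adj_exit {A W : Finset (ℤ × ℤ)} (hA : IsLatticeAnimal A)
    (h0 : (0, 0) ∈ W) (hAW : ¬A ⊆ W) : ∃ y ∈ W, ∃ z ∈ A, z ∉ W ∧ LatAdj y z := by
  obtain ⟨z, hzA, hzW⟩ := not_subset.1 hAW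
  suffices ∀ c, Relation.ReflTransGen (fun a b => LatAdj a b ∧ a ∈ A ∧ b ∈ A) (0, 0) c →
      c ∈ W ∨ ∃ y ∈ W, ∃ z ∈ A, z ∉ W ∧ LatAdj y z from
    (this z (hA.2 z hzA)).resolve_left hzW
  intro c hc
  induction hc with
  | refl => exact .inl h0
  | @tail b c _ hbc ih =>
    refine ih.elim (fun hb => ?_) .inr
    by_cases hc : c ∈ W
    · exact .inl hc
    · exact .inr ⟨b, hb, c, hbc.2.2, hc, hbc.1⟩

/-- Each new site `z`, adjacent to an already visited site `y`, is spliced in as a detour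
`y → z → y`. -/
lemma IsLatticeAnimal.exists_walk {A : Finset (ℤ × ℤ)} (hA : IsLatticeAnimal A) :
    ∀ n < #A, ∃ w : List (ℤ × ℤ), w.IsChain LatAdj ∧ w.getLast? = some (0, 0) ∧
      w.length = 2 * n + 1 ∧ w.toFinset ⊆ A ∧ #w.toFinset = n + 1
  | 0, _ => ⟨[(0, 0)], .singleton _, rfl, rfl, by simpa using hA.1, rfl⟩
  | n + 1, hn => by
    obtain ⟨w, hchain, hlast, hlen, hsub, hcard⟩ := hA.exists_walk n (by omega)
    obtain ⟨y, hy, z, hzA, hzw, hyz⟩ := hA.exists_adj_exit (W := w.toFinset)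
      (List.mem_toFinset.2 (List.mem_of_getLast? hlast))
      (fun h => by have := card_le_card h; omega)
    obtain ⟨w₁, w₂, rfl⟩ := List.append_of_mem (List.mem_toFinset.1 hy)
    have htoFinset : (w₁ ++ y :: z :: y :: w₂).toFinset = insert z (w₁ ++ y :: w₂).toFinset := by
      ext; simp
    refine ⟨w₁ ++ y :: z :: y :: w₂, ?_, ?_, ?_, ?_, ?_⟩
    · rw [List.isChain_split] at hchain ⊢
      exact ⟨hchain.1, List.IsChain.cons_cons hyz (hchain.2.cons_cons hyz.symm)⟩
    · simpa [List.getLast?_append] using hlast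
    · simp only [List.length_append, List.length_cons] at hlen ⊢; omega
    · rw [htoFinset]; exact insert_subset hzA hsub
    · rw [htoFinset, card_insert_of_notMem hzw, hcard]

instance (k : ℕ) : DecidablePred (LinfSep k) := fun _ => by unfold LinfSep; infer_instance

lemma LinfSep.mono {m : ℕ} {B C : Finset (ℤ × ℤ)} (hB : LinfSep m B) (h : C ⊆ B) :
    LinfSep m C := fun a ha b hb hab => hB a (h ha) b (h hb) hab

def linfBall (z : ℤ × ℤ) (m : ℕ) : Finset (ℤ × ℤ) :=
  Icc (z.1 - m + 1) (z.1 + m - 1) ×ˢ Icc (z.2 - m + 1) (z.2 + m - 1)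

lemma card_linfBall (z : ℤ × ℤ) (m : ℕ) : #(linfBall z m) = (2 * m - 1) ^ 2 := by
  simp only [linfBall, card_product, Int.card_Icc, sq]
  congr 1 <;> omega

lemma mem_linfBall_self (z : ℤ × ℤ) {m : ℕ} (hm : 1 ≤ m) : z ∈ linfBall z m := by
  simp only [linfBall, mem_product, mem_Icc]
  omega

lemma le_max_abs_of_notMem_linfBall {z w : ℤ × ℤ} {m : ℕ} (h : w ∉ linfBall z m) :
    (m : ℤ) ≤ max |z.1 - w.1| |z.2 - w.2| := by
  simp only [linfBall, mem_product, mem_Icc] at h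
  rw [le_max_iff, le_abs, le_abs]
  omega

/-- Greedy extraction: keep a point, discard its `ℓ∞`-ball, and repeat. -/
lemma exists_linfSep_subset {m : ℕ} (hm : 1 ≤ m) (S : Finset (ℤ × ℤ)) :
    ∃ B ⊆ S, LinfSep m B ∧ #S ≤ (2 * m - 1) ^ 2 * #B := by
  induction S using Finset.strongInduction with
  | _ S ih =>
  obtain rfl | ⟨z, hz⟩ := S.eq_empty_or_nonempty
  · exact ⟨∅, empty_subset _, fun _ h => absurd h (notMem_empty _), by simp⟩
  obtain ⟨B, hBS, hB, hcard⟩ := ih (S \ linfBall z m)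
    ((ssubset_iff_of_subset sdiff_subset).2
      ⟨z, hz, fun h => (mem_sdiff.1 h).2 (mem_linfBall_self z hm)⟩)
  have hfar : ∀ w ∈ B, (m : ℤ) ≤ max |z.1 - w.1| |z.2 - w.2| := fun w hw =>
    le_max_abs_of_notMem_linfBall (mem_sdiff.1 (hBS hw)).2
  have hzB : z ∉ B := fun h => (mem_sdiff.1 (hBS h)).2 (mem_linfBall_self z hm)
  refine ⟨insert z B, insert_subset hz (hBS.trans sdiff_subset), ?_, ?_⟩
  · intro a ha b hb hab
    rcases mem_insert.1 ha with rfl | haB <;> rcases mem_insert.1 hb with rfl | hbB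
    · exact absurd rfl hab
    · exact hfar b hbB
    · rw [abs_sub_comm a.1, abs_sub_comm a.2]; exact hfar a haB
    · exact hB a haB b hbB hab
  · calc #S ≤ #(S \ linfBall z m) + #(linfBall z m) := card_le_card_sdiff_add_card
      _ ≤ (2 * m - 1) ^ 2 * #B + (2 * m - 1) ^ 2 := by rw [card_linfBall]; omega
      _ = (2 * m - 1) ^ 2 * #(insert z B) := by rw [card_insert_of_notMem hzB]; ring

lemma card_filter_eq_one_lt {k : ℕ} (hk : 1 ≤ k) {y : ℤ × ℤ → ℝ} {W : Finset (ℤ × ℤ)} {c : ℝ}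
    (h : ∀ B ⊆ W, LinfSep k B → ∑ z ∈ B, y z < c) :
    (#(W.filter (y · = 1)) : ℝ) < ((2 * k - 1) ^ 2 : ℕ) * c := by
  obtain ⟨B, hBW, hB, hcard⟩ := exists_linfSep_subset hk (W.filter (y · = 1))
  have hsum : ∑ z ∈ B, y z = #B := by
    rw [sum_congr rfl fun z hz => (mem_filter.1 (hBW hz)).2]; simp
  have hpos : (0 : ℝ) < ((2 * k - 1) ^ 2 : ℕ) := by exact_mod_cast pow_pos (by omega) 2
  calc (#(W.filter (y · = 1)) : ℝ) ≤ ((2 * k - 1) ^ 2 : ℕ) * #B := by exact_mod_cast hcard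
    _ < ((2 * k - 1) ^ 2 : ℕ) * c := by
      rw [← hsum]; exact mul_lt_mul_of_pos_left (h B (hBW.trans (filter_subset _ _)) hB) hpos

lemma exists_linfSep_subset_sdiff {m : ℕ} (hm : 1 ≤ m) {W D : Finset (ℤ × ℤ)}
    (h : 2 * (2 * m - 1) ^ 2 * #D < #W) :
    ∃ C ⊆ W \ D, LinfSep m C ∧ #W < 2 * (2 * m - 1) ^ 2 * #C := by
  obtain ⟨B, hBW, hB, hcard⟩ := exists_linfSep_subset hm W
  refine ⟨B \ D, sdiff_subset_sdiff hBW subset_rfl, hB.mono sdiff_subset, ?_⟩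
  have : #B ≤ #(B \ D) + #D := card_le_card_sdiff_add_card
  have := Nat.mul_le_mul_left ((2 * m - 1) ^ 2) this
  rw [mul_add] at this
  linarith

def walkTraces (s : ℕ) : Finset (Finset (ℤ × ℤ)) :=
  ((latticeWalks (2 * (s - 1))).image List.toFinset).filter (#· = s)

lemma card_walkTraces_le (s : ℕ) : #(walkTraces s) ≤ 16 ^ s :=
  calc #(walkTraces s) ≤ #(latticeWalks (2 * (s - 1))) :=
        (card_filter_le _ _).trans card_image_le
    _ ≤ 4 ^ (2 * (s - 1)) := card_latticeWalks_le _
    _ ≤ 16 ^ s := by rw [pow_mul]; exact Nat.pow_le_pow_of_le (by norm_num) (by omega)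

lemma IsLatticeAnimal.exists_mem_walkTraces {A : Finset (ℤ × ℤ)} (hA : IsLatticeAnimal A)
    {s : ℕ} (hs : 1 ≤ s) (hsA : s ≤ #A) : ∃ W ∈ walkTraces s, W ⊆ A := by
  obtain ⟨w, hchain, hlast, hlen, hsub, hcard⟩ := hA.exists_walk (s - 1) (by omega)
  exact ⟨w.toFinset, mem_filter.2 ⟨mem_image_of_mem _ (mem_latticeWalks hchain hlast hlen),
    by omega⟩, hsub⟩

def zeroCandidates (l s : ℕ) : Finset (Finset (ℤ × ℤ)) :=
  (walkTraces s).biUnion fun W =>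
    W.powerset.filter fun C => LinfSep l C ∧ s < 2 * (2 * l - 1) ^ 2 * #C

lemma card_zeroCandidates_le (l s : ℕ) : #(zeroCandidates l s) ≤ 16 ^ s * 2 ^ s := by
  refine card_biUnion_le_card_mul _ _ _ (fun W hW => ?_) |>.trans
    (Nat.mul_le_mul_right _ (card_walkTraces_le s))
  rw [← (mem_filter.1 hW).2, ← card_powerset]
  exact card_filter_le _ _

lemma exists_mem_zeroCandidates {l k : ℕ} (hl : 1 ≤ l) (hk : 1 ≤ k) {y : ℤ × ℤ → ℝ}
    (h01 : ∀ z, y z = 0 ∨ y z = 1) {A : Finset (ℤ × ℤ)} (hA : IsLatticeAnimal A) {s : ℕ}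
    (hs : 1 ≤ s) (hsA : s ≤ #A)
    (hsmall : ∀ B ⊆ A, LinfSep k B →
      ∑ z ∈ B, y z < (((2 * k - 1) ^ 2 * (2 * (2 * l - 1) ^ 2) : ℕ) : ℝ)⁻¹ * s) :
    ∃ C ∈ zeroCandidates l s, ∀ z ∈ C, y z = 0 := by
  obtain ⟨W, hW, hWA⟩ := hA.exists_mem_walkTraces hs hsA
  have hWs : #W = s := (mem_filter.1 hW).2
  have hones := card_filter_eq_one_lt hk fun B hB => hsmall B (hB.trans hWA)
  have hfew : 2 * (2 * l - 1) ^ 2 * #(W.filter (y · = 1)) < #W := by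
    have hk' : (0 : ℝ) < ((2 * k - 1) ^ 2 : ℕ) := by exact_mod_cast pow_pos (by omega) 2
    have hl' : (0 : ℝ) < (2 * (2 * l - 1) ^ 2 : ℕ) := by
      exact_mod_cast Nat.mul_pos two_pos (pow_pos (by omega) 2)
    rw [← mul_assoc, Nat.cast_mul, mul_inv, ← mul_assoc, mul_inv_cancel₀ hk'.ne', one_mul,
      ← div_eq_inv_mul, lt_div_iff₀ hl'] at hones
    rw [hWs]; exact_mod_cast (mul_comm _ _).trans_lt hones
  obtain ⟨C, hCW, hC, hcard⟩ := exists_linfSep_subset_sdiff hl hfew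
  refine ⟨C, mem_biUnion.2 ⟨W, hW, mem_filter.2 ⟨mem_powerset.2 (hCW.trans sdiff_subset), hC,
    hWs ▸ hcard⟩⟩, fun z hz => ?_⟩
  have hz := mem_sdiff.1 (hCW hz)
  simp only [mem_filter, not_and] at hz
  exact (h01 z).resolve_right (hz.2 hz.1)

section Probability

variable {Ω : Type} [MeasurableSpace Ω] {μ : Measure Ω} [IsProbabilityMeasure μ] {l : ℕ}
  {Y : ℤ × ℤ → Ω → ℝ}

lemma LDependent.measure_forall_mem_eq_prod (hdep : LDependent μ l Y) {S : ℤ × ℤ → Set ℝ}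
    (hS : ∀ z, MeasurableSet (S z)) {C : Finset (ℤ × ℤ)} (hC : LinfSep l C) :
    μ {ω | ∀ z ∈ C, Y z ω ∈ S z} = ∏ z ∈ C, μ (Y z ⁻¹' S z) := by
  classical
  induction C using Finset.induction with
  | empty => simp
  | insert a C haC ih =>
    have hind := hdep {a} C fun z hz w hw => by
      rw [Set.mem_singleton_iff.1 hz]
      exact hC a (mem_insert_self a C) w (mem_insert_of_mem hw) (by rintro rfl; exact haC hw)
    have hsplit := hind.measure_inter_preimage_eq_mul {f | f ⟨a, rfl⟩ ∈ S a}
      (Set.univ.pi fun w : (C : Set (ℤ × ℤ)) => S w) (measurable_pi_apply _ (hS a))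
      (MeasurableSet.univ_pi fun w => hS w)
    rw [prod_insert haC, ← ih (hC.mono (subset_insert a C))]
    convert hsplit using 3 <;> ext ω <;> simp

lemma LDependent.measure_forall_eq_zero_le (hdep : LDependent μ l Y)
    (hmeas : ∀ z, Measurable (Y z)) (h01 : ∀ z ω, Y z ω = 0 ∨ Y z ω = 1) {p : ℝ}
    (hp : ∀ z, ENNReal.ofReal p ≤ μ {ω | Y z ω = 1}) {C : Finset (ℤ × ℤ)} (hC : LinfSep l C) :
    μ {ω | ∀ z ∈ C, Y z ω = 0} ≤ (1 - ENNReal.ofReal p) ^ #C := by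
  refine (hdep.measure_forall_mem_eq_prod (S := fun _ => {0})
    (fun _ => measurableSet_singleton 0) hC).trans_le (prod_le_pow_card _ _ _ fun z _ => ?_)
  have hzero : Y z ⁻¹' {0} = {ω | Y z ω = 1}ᶜ := by
    ext ω; rcases h01 z ω with h | h <;> simp [h]
  have hone : MeasurableSet {ω | Y z ω = 1} := hmeas z (measurableSet_singleton 1)
  rw [hzero, prob_compl_eq_one_sub hone]
  exact tsub_le_tsub_left (hp z) 1

lemma LDependent.measure_forall_eq_zero_le_of_mem_zeroCandidates (hdep : LDependent μ l Y)
    (hmeas : ∀ z, Measurable (Y z)) (h01 : ∀ z ω, Y z ω = 0 ∨ Y z ω = 1) {p ε : ℝ}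
    (hp0 : 0 ≤ p) (hp1 : p ≤ 1) (hε0 : 0 ≤ ε) (hε1 : ε ≤ 1)
    (hpε : 1 - p ≤ ε ^ (2 * (2 * l - 1) ^ 2))
    (hp : ∀ z, ENNReal.ofReal p ≤ μ {ω | Y z ω = 1}) {s : ℕ} {C : Finset (ℤ × ℤ)}
    (hCmem : C ∈ zeroCandidates l s) : μ {ω | ∀ z ∈ C, Y z ω = 0} ≤ ENNReal.ofReal (ε ^ s) := by
  obtain ⟨-, -, -, hC, hsC⟩ :
      ∃ W ∈ walkTraces s, C ⊆ W ∧ LinfSep l C ∧ s < 2 * (2 * l - 1) ^ 2 * #C := by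
    simpa [zeroCandidates] using hCmem
  calc μ {ω | ∀ z ∈ C, Y z ω = 0} ≤ (1 - ENNReal.ofReal p) ^ #C :=
        hdep.measure_forall_eq_zero_le hmeas h01 hp hC
    _ = ENNReal.ofReal ((1 - p) ^ #C) := by
      rw [ENNReal.ofReal_pow (by linarith), ENNReal.ofReal_sub _ hp0, ENNReal.ofReal_one]
    _ ≤ ENNReal.ofReal (ε ^ s) := by
      refine ENNReal.ofReal_le_ofReal ?_
      calc (1 - p) ^ #C ≤ (ε ^ (2 * (2 * l - 1) ^ 2)) ^ #C :=
            pow_le_pow_left₀ (by linarith) hpε _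
        _ = ε ^ (2 * (2 * l - 1) ^ 2 * #C) := (pow_mul _ _ _).symm
        _ ≤ ε ^ s := pow_le_pow_of_le_one hε0 hε1 hsC.le

end Probability

lemma card_zeroCandidates_mul_le (l s : ℕ) :
    (#(zeroCandidates l s) : ℝ) * (1 / 64) ^ s ≤ Real.exp (-Real.log 2 * s) :=
  calc _ ≤ ((16 ^ s * 2 ^ s : ℕ) : ℝ) * (1 / 64) ^ s := by
        gcongr; exact_mod_cast card_zeroCandidates_le l s
    _ = (1 / 2) ^ s := by push_cast; rw [← mul_pow, ← mul_pow]; norm_num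
    _ = Real.exp (-Real.log 2 * s) := by
      rw [← Real.exp_log (by norm_num : (0 : ℝ) < 1 / 2), ← Real.exp_nat_mul, one_div,
        Real.log_inv]
      ring_nf

end

/-- For every `l ≥ 1` there is `p0 ∈ (0,1)` such that for every `p ∈ (p0,1)`
and every `k ≥ 1` there are constants `b3, b4 > 0` (depending only on `l`, `k`, `p`) with:
for every `l`-dependent family `(Y_z)` of `{0,1}`-valued random variables with
`inf_z P(Y_z = 1) ≥ p` and every `s ≥ 1`, `P(m_s^k(Y) < b3 s) ≤ e^{-b4 s}`, where
`m_s^k(Y)` is the minimum over lattice animals `A` with at least `s` sites of the maximal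
value of `Σ_{z ∈ B} Y_z` over `k`-separated subsets `B ⊆ A`. -/
theorem stmt3 (l : ℕ) (hl : 1 ≤ l) :
    ∃ p0 : ℝ, 0 < p0 ∧ p0 < 1 ∧
      ∀ p : ℝ, p0 < p → p < 1 →
      ∀ k : ℕ, 1 ≤ k →
        ∃ b3 > (0 : ℝ), ∃ b4 > (0 : ℝ),
          ∀ (Ω : Type) (m : MeasurableSpace Ω) (μ : Measure Ω), IsProbabilityMeasure μ →
          ∀ Y : ℤ × ℤ → Ω → ℝ,
            (∀ z, Measurable (Y z)) →
            (∀ z ω, Y z ω = 0 ∨ Y z ω = 1) →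
            LDependent μ l Y →
            (∀ z, ENNReal.ofReal p ≤ μ {ω | Y z ω = 1}) →
            ∀ s : ℕ, 1 ≤ s →
              μ {ω | ∃ A : Finset (ℤ × ℤ), IsLatticeAnimal A ∧ s ≤ A.card ∧
                  ∀ B ⊆ A, LinfSep k B → ∑ z ∈ B, Y z ω < b3 * s} ≤
                ENNReal.ofReal (Real.exp (-b4 * s)) := by
  have hε1 : (1 / 64 : ℝ) ^ (2 * (2 * l - 1) ^ 2) < 1 :=
    pow_lt_one₀ (by norm_num) (by norm_num) (by simp; omega)
  have hε0 : (0 : ℝ) < (1 / 64) ^ (2 * (2 * l - 1) ^ 2) := by positivity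
  refine ⟨1 - (1 / 64) ^ (2 * (2 * l - 1) ^ 2), by linarith, by linarith,
    fun p hp0 hp1 k hk => ?_⟩
  refine ⟨(((2 * k - 1) ^ 2 * (2 * (2 * l - 1) ^ 2) : ℕ) : ℝ)⁻¹,
    inv_pos.2 (by exact_mod_cast Nat.pos_of_ne_zero (by simp; omega)), Real.log 2,
    Real.log_pos one_lt_two, ?_⟩
  intro Ω _ μ _ Y hmeas h01 hdep hp s hs
  calc μ _ ≤ μ (⋃ C ∈ zeroCandidates l s, {ω | ∀ z ∈ C, Y z ω = 0}) :=
        measure_mono <| by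
          rintro ω ⟨A, hA, hsA, hsmall⟩
          obtain ⟨C, hC, hzero⟩ := exists_mem_zeroCandidates hl hk (h01 · ω) hA hs hsA hsmall
          exact Set.mem_iUnion₂_of_mem hC hzero
    _ ≤ ∑ C ∈ zeroCandidates l s, μ {ω | ∀ z ∈ C, Y z ω = 0} := measure_biUnion_finset_le _ _
    _ ≤ #(zeroCandidates l s) • ENNReal.ofReal ((1 / 64) ^ s) :=
        sum_le_card_nsmul _ _ _ fun C hC =>
          hdep.measure_forall_eq_zero_le_of_mem_zeroCandidates hmeas h01 (by linarith) hp1.le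
            (by norm_num) (by norm_num) (by linarith) hp hC
    _ ≤ ENNReal.ofReal (Real.exp (-Real.log 2 * s)) := by
      rw [nsmul_eq_mul, ← ENNReal.ofReal_natCast, ← ENNReal.ofReal_mul (by positivity)]
      exact ENNReal.ofReal_le_ofReal (card_zeroCandidates_mul_le l s)
end

section
/- There exists ρ0 ∈ (0,1) such that for every ρ ∈ (ρ0, 1) there exist constants b, b' > 0 with the following property: if (Y_z)_{z∈ℤ²} are independent, identically distributed {0,1}-valued random variables with P(Y_z = 1) = ρ, then for every integer s ≥ 1, P(there exists a lattice animal A with at least s sites and Σ_{z∈A} Y_z < b·s) ≤ e^{−b'·s}. -/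
/-!
A lattice animal with at least `s` sites contains one with exactly `s` sites, and such an
animal is the set of sites visited by a nearest-neighbour walk of `2 (s - 1)` steps from the
origin (a depth-first traversal of a spanning tree), so there are at most `16 ^ s` candidates.
A fixed set of `s` sites has `Σ Y < s / 2` only if more than half of its sites are zeros; a
union bound over these `≤ 2 ^ s` subsets gives probability at most `(2 ε) ^ s` once
`1 - ρ ≤ ε ^ 2`. Taking `ε = e⁻¹ / 32` the total is at most `e ^ (-s)`.
-/

open MeasureTheory ProbabilityTheory Finset
open scoped ENNReal

namespace LatticeAnimal

def latDir : Fin 4 → ℤ × ℤ := ![(1, 0), (-1, 0), (0, 1), (0, -1)]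

lemma exists_latDir_of_latAdj {p z : ℤ × ℤ} (h : LatAdj p z) :
    ∃ d d' : Fin 4, p + latDir d = z ∧ z + latDir d' = p := by
  obtain ⟨p1, p2⟩ := p
  obtain ⟨z1, z2⟩ := z
  simp only [LatAdj] at h
  have hcases :
      (z1 = p1 + 1 ∨ z1 = p1 - 1) ∧ z2 = p2 ∨ z1 = p1 ∧ (z2 = p2 + 1 ∨ z2 = p2 - 1) := by
    omega
  rcases hcases with ⟨rfl | rfl, rfl⟩ | ⟨rfl, rfl | rfl⟩
  · exact ⟨0, 1, by simp [latDir]⟩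
  · exact ⟨1, 0, by simp [latDir, sub_eq_add_neg]⟩
  · exact ⟨2, 3, by simp [latDir]⟩
  · exact ⟨3, 2, by simp [latDir, sub_eq_add_neg]⟩

def walkEnd (x : ℤ × ℤ) (l : List (Fin 4)) : ℤ × ℤ := x + (l.map latDir).sum

def walkSites : ℤ × ℤ → List (Fin 4) → Finset (ℤ × ℤ)
  | x, [] => {x}
  | x, d :: l => insert x (walkSites (x + latDir d) l)

@[simp]
lemma walkEnd_nil (x : ℤ × ℤ) : walkEnd x [] = x := by simp [walkEnd]

@[simp]
lemma walkEnd_cons (x : ℤ × ℤ) (d : Fin 4) (l : List (Fin 4)) :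
    walkEnd x (d :: l) = walkEnd (x + latDir d) l := by
  simp [walkEnd, add_assoc]

lemma self_mem_walkSites (x : ℤ × ℤ) (l : List (Fin 4)) : x ∈ walkSites x l := by
  cases l <;> simp [walkSites]

lemma walkEnd_mem_walkSites (x : ℤ × ℤ) (l : List (Fin 4)) :
    walkEnd x l ∈ walkSites x l := by
  induction l generalizing x with
  | nil => simp [walkSites]
  | cons d l ih => simpa [walkSites] using Or.inr (ih _)

lemma walkSites_append (x : ℤ × ℤ) (a b : List (Fin 4)) :
    walkSites x (a ++ b) = walkSites x a ∪ walkSites (walkEnd x a) b := by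
  induction a generalizing x with
  | nil => simp [walkSites, self_mem_walkSites]
  | cons d a ih => simp [walkSites, ih]

lemma exists_append_of_mem_walkSites {x p : ℤ × ℤ} {l : List (Fin 4)}
    (hp : p ∈ walkSites x l) : ∃ a b, l = a ++ b ∧ walkEnd x a = p := by
  induction l generalizing x with
  | nil => exact ⟨[], [], rfl, by simpa [walkSites, eq_comm] using hp⟩
  | cons d l ih =>
    rcases mem_insert.mp hp with rfl | hp
    · exact ⟨[], d :: l, rfl, walkEnd_nil _⟩
    · obtain ⟨a, b, rfl, rfl⟩ := ih hp
      exact ⟨d :: a, b, rfl, walkEnd_cons _ _ _⟩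

lemma walkSites_splice {x p z : ℤ × ℤ} {a b : List (Fin 4)} {d d' : Fin 4}
    (hp : walkEnd x a = p) (hd : p + latDir d = z) (hd' : z + latDir d' = p) :
    walkSites x (a ++ d :: d' :: b) = insert z (walkSites x (a ++ b)) := by
  have hpa := hp ▸ walkEnd_mem_walkSites x a
  ext y
  simp only [walkSites_append, hp, walkSites, hd, hd', mem_union, mem_insert]
  constructor
  · rintro (h | rfl | rfl | h) <;> tauto
  · rintro (rfl | h | h) <;> tauto

lemma exists_latAdj_of_reflTransGen {A B : Finset (ℤ × ℤ)} {v y : ℤ × ℤ}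
    (h : Relation.ReflTransGen (fun a b => LatAdj a b ∧ a ∈ A ∧ b ∈ A) v y)
    (hv : v ∈ B) (hy : y ∉ B) : ∃ p ∈ B, ∃ z ∈ A, z ∉ B ∧ LatAdj p z := by
  induction h with
  | refl => exact absurd hv hy
  | @tail c y _ hcy ih =>
    by_cases hc : c ∈ B
    · exact ⟨c, hc, y, hcy.2.2, hy, hcy.1⟩
    · exact ih hc

lemma exists_walkSites_subset {A : Finset (ℤ × ℤ)} (hA : IsLatticeAnimal A) :
    ∀ n < A.card, ∃ l : List (Fin 4), l.length = 2 * n ∧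
      walkSites (0, 0) l ⊆ A ∧ (walkSites (0, 0) l).card = n + 1
  | 0, _ => ⟨[], rfl, by simpa [walkSites] using hA.1, rfl⟩
  | n + 1, hn => by
    obtain ⟨l, hlen, hsub, hcard⟩ := exists_walkSites_subset hA n (by omega)
    obtain ⟨y, hyA, hyl⟩ := exists_mem_notMem_of_card_lt_card (hcard ▸ hn)
    obtain ⟨p, hp, z, hzA, hzl, hpz⟩ :=
      exists_latAdj_of_reflTransGen (hA.2 y hyA) (self_mem_walkSites _ _) hyl
    obtain ⟨a, b, rfl, hab⟩ := exists_append_of_mem_walkSites hp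
    obtain ⟨d, d', hd, hd'⟩ := exists_latDir_of_latAdj hpz
    refine ⟨a ++ d :: d' :: b, ?_, ?_, ?_⟩
    · simp only [List.length_append, List.length_cons] at hlen ⊢
      omega
    · rw [walkSites_splice hab hd hd']
      exact insert_subset hzA hsub
    · rw [walkSites_splice hab hd hd', card_insert_of_notMem hzl, hcard]

def walkSiteSets (n : ℕ) : Finset (Finset (ℤ × ℤ)) :=
  univ.image fun l : List.Vector (Fin 4) n => walkSites (0, 0) l.toList

lemma card_walkSiteSets_le (n : ℕ) : (walkSiteSets n).card ≤ 4 ^ n :=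
  (card_image_le).trans (by simp)

lemma exists_mem_walkSiteSets {A : Finset (ℤ × ℤ)} (hA : IsLatticeAnimal A) {s : ℕ}
    (hs : 1 ≤ s) (hsA : s ≤ A.card) :
    ∃ B ∈ walkSiteSets (2 * (s - 1)), B ⊆ A ∧ B.card = s := by
  obtain ⟨l, hlen, hsub, hcard⟩ := exists_walkSites_subset hA (s - 1) (by omega)
  exact ⟨walkSites (0, 0) l, mem_image.mpr ⟨⟨l, hlen⟩, mem_univ _, rfl⟩, hsub, by omega⟩

end LatticeAnimal

section Bernoulli

variable {ι Ω : Type*} [MeasurableSpace Ω] {μ : Measure Ω} {Y : ι → Ω → ℝ}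

lemma sum_eq_card_sub_card_filter_eq_zero {f : ι → ℝ} (hf : ∀ z, f z = 0 ∨ f z = 1)
    (B : Finset ι) : ∑ z ∈ B, f z = B.card - #(B.filter (f · = 0)) := by
  rw [natCast_card_filter, ← nsmul_one, ← sum_const, ← sum_sub_distrib]
  refine sum_congr rfl fun z _ => ?_
  rcases hf z with h | h <;> simp [h]

lemma measure_sum_lt_half_card_le (h01 : ∀ z ω, Y z ω = 0 ∨ Y z ω = 1)
    (hind : iIndepFun Y μ) {ε : ℝ≥0∞} (hε : ε ≤ 1)
    (hzero : ∀ z, μ {ω | Y z ω = 0} ≤ ε ^ 2) (B : Finset ι) :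
    μ {ω | ∑ z ∈ B, Y z ω < B.card / 2} ≤ (2 * ε) ^ B.card := by
  classical
  let 𝒮 := B.powerset.filter fun S => B.card ≤ 2 * S.card
  have hsub :
      {ω | ∑ z ∈ B, Y z ω < B.card / 2} ⊆ ⋃ S ∈ 𝒮, ⋂ z ∈ S, {ω | Y z ω = 0} := by
    intro ω (hω : ∑ z ∈ B, Y z ω < B.card / 2)
    have hlt : (B.card : ℝ) ≤ 2 * #(B.filter (Y · ω = 0)) := by
      rw [sum_eq_card_sub_card_filter_eq_zero (h01 · ω)] at hω
      linarith
    simp only [Set.mem_iUnion, Set.mem_iInter]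
    exact ⟨_, mem_filter.mpr ⟨mem_powerset.mpr (filter_subset _ _), by exact_mod_cast hlt⟩,
      fun z hz => (mem_filter.mp hz).2⟩
  have hterm : ∀ S ∈ 𝒮, μ (⋂ z ∈ S, {ω | Y z ω = 0}) ≤ ε ^ B.card := by
    intro S hS
    rw [hind.meas_biInter (s := fun z => {ω | Y z ω = 0})
      fun z _ => ⟨{0}, measurableSet_singleton 0, rfl⟩]
    calc ∏ z ∈ S, μ {ω | Y z ω = 0} ≤ (ε ^ 2) ^ S.card :=
          prod_le_pow_card _ _ _ fun z _ => hzero z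
      _ = ε ^ (2 * S.card) := by rw [pow_mul]
      _ ≤ ε ^ B.card := pow_le_pow_right_of_le_one' hε (mem_filter.mp hS).2
  calc μ {ω | ∑ z ∈ B, Y z ω < B.card / 2}
      ≤ ∑ S ∈ 𝒮, μ (⋂ z ∈ S, {ω | Y z ω = 0}) :=
        (measure_mono hsub).trans (measure_biUnion_finset_le _ _)
    _ ≤ 𝒮.card * ε ^ B.card := by
      simpa using sum_le_sum hterm
    _ ≤ 2 ^ B.card * ε ^ B.card := by
      gcongr
      exact_mod_cast (card_filter_le _ _).trans (card_powerset B).le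
    _ = (2 * ε) ^ B.card := (mul_pow _ _ _).symm


lemma measure_setOf_eq_zero {X : Ω → ℝ} [IsProbabilityMeasure μ] (hX : Measurable X)
    (h01 : ∀ ω, X ω = 0 ∨ X ω = 1) {ρ : ℝ} (hρ : 0 ≤ ρ)
    (h1 : μ {ω | X ω = 1} = ENNReal.ofReal ρ) :
    μ {ω | X ω = 0} = ENNReal.ofReal (1 - ρ) := by
  have hcompl : {ω | X ω = 0} = {ω | X ω = 1}ᶜ := by
    ext ω
    rcases h01 ω with h | h <;> simp [h]
  rw [hcompl, prob_compl_eq_one_sub (measurableSet_eq_fun hX measurable_const), h1,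
    ENNReal.ofReal_sub _ hρ, ENNReal.ofReal_one]

end Bernoulli

open LatticeAnimal in
lemma measure_exists_isLatticeAnimal_sum_lt_le {Ω : Type*} [MeasurableSpace Ω]
    {μ : Measure Ω} {Y : ℤ × ℤ → Ω → ℝ} (h01 : ∀ z ω, Y z ω = 0 ∨ Y z ω = 1)
    (hind : iIndepFun Y μ) {ε : ℝ≥0∞} (hε : ε ≤ 1) (hzero : ∀ z, μ {ω | Y z ω = 0} ≤ ε ^ 2)
    {s : ℕ} (hs : 1 ≤ s) :
    μ {ω | ∃ A : Finset (ℤ × ℤ), IsLatticeAnimal A ∧ s ≤ A.card ∧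
      ∑ z ∈ A, Y z ω < 1 / 2 * s} ≤ (32 * ε) ^ s := by
  let 𝒲 := (walkSiteSets (2 * (s - 1))).filter (·.card = s)
  have hsub : {ω | ∃ A : Finset (ℤ × ℤ), IsLatticeAnimal A ∧ s ≤ A.card ∧
      ∑ z ∈ A, Y z ω < 1 / 2 * s} ⊆ ⋃ B ∈ 𝒲, {ω | ∑ z ∈ B, Y z ω < B.card / 2} := by
    rintro ω ⟨A, hA, hsA, hsum⟩
    obtain ⟨B, hB, hBA, rfl⟩ := exists_mem_walkSiteSets hA hs hsA
    refine Set.mem_biUnion (mem_filter.mpr ⟨hB, rfl⟩) ?_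
    calc ∑ z ∈ B, Y z ω ≤ ∑ z ∈ A, Y z ω :=
          sum_le_sum_of_subset_of_nonneg hBA fun z _ _ => by
            rcases h01 z ω with h | h <;> simp [h]
      _ < _ := by linarith
  have hcard : 𝒲.card ≤ 16 ^ s := by
    refine (card_filter_le _ _).trans ((card_walkSiteSets_le _).trans ?_)
    rw [pow_mul]
    exact Nat.pow_le_pow_right (by norm_num) (by omega)
  calc _ ≤ ∑ B ∈ 𝒲, μ {ω | ∑ z ∈ B, Y z ω < B.card / 2} :=
        (measure_mono hsub).trans (measure_biUnion_finset_le _ _)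
    _ ≤ ∑ B ∈ 𝒲, (2 * ε) ^ s := sum_le_sum fun B hB => (mem_filter.mp hB).2 ▸
        measure_sum_lt_half_card_le h01 hind hε hzero B
    _ ≤ 16 ^ s * (2 * ε) ^ s := by
      rw [sum_const, nsmul_eq_mul]
      gcongr
      exact_mod_cast hcard
    _ = (32 * ε) ^ s := by rw [← mul_pow, ← mul_assoc]; norm_num

/-- There is `ρ0 ∈ (0,1)` such that for every `ρ ∈ (ρ0,1)` there are
constants `b, b' > 0` with: for every i.i.d. family `(Y_z)_{z ∈ ℤ²}` of `{0,1}`-valued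
random variables with `P(Y_z = 1) = ρ` and every `s ≥ 1`,
`P(∃ lattice animal A with ≥ s sites and Σ_{z ∈ A} Y_z < b s) ≤ e^{-b' s}`. -/
theorem stmt4 :
    ∃ ρ0 : ℝ, 0 < ρ0 ∧ ρ0 < 1 ∧
      ∀ ρ : ℝ, ρ0 < ρ → ρ < 1 →
        ∃ b > (0 : ℝ), ∃ b' > (0 : ℝ),
          ∀ (Ω : Type) (m : MeasurableSpace Ω) (μ : Measure Ω), IsProbabilityMeasure μ →
          ∀ Y : ℤ × ℤ → Ω → ℝ,
            (∀ z, Measurable (Y z)) →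
            (∀ z ω, Y z ω = 0 ∨ Y z ω = 1) →
            iIndepFun Y μ →
            (∀ z w : ℤ × ℤ, IdentDistrib (Y z) (Y w) μ μ) →
            (∀ z, μ {ω | Y z ω = 1} = ENNReal.ofReal ρ) →
            ∀ s : ℕ, 1 ≤ s →
              μ {ω | ∃ A : Finset (ℤ × ℤ), IsLatticeAnimal A ∧ s ≤ A.card ∧
                  ∑ z ∈ A, Y z ω < b * s} ≤ ENNReal.ofReal (Real.exp (-b' * s)) := by
  set δ : ℝ := Real.exp (-1) / 32 with hδ
  have hδ0 : 0 < δ := by positivity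
  have hδ1 : δ < 1 := by linarith [Real.exp_lt_one_iff.mpr (neg_one_lt_zero (R := ℝ))]
  refine ⟨1 - δ ^ 2, by nlinarith, by nlinarith,
    fun ρ hρ0 hρ1 => ⟨1 / 2, one_half_pos, 1, one_pos, ?_⟩⟩
  intro Ω _ μ _ Y hY h01 hind _ hρ s hs
  have hzero (z : ℤ × ℤ) : μ {ω | Y z ω = 0} ≤ ENNReal.ofReal δ ^ 2 := by
    rw [measure_setOf_eq_zero (hY z) (h01 z) (by nlinarith) (hρ z), ← ENNReal.ofReal_pow hδ0.le]
    exact ENNReal.ofReal_le_ofReal (by linarith)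
  have hexp : (32 * ENNReal.ofReal δ) ^ s = ENNReal.ofReal (Real.exp (-1 * s)) := by
    rw [mul_comm (-1 : ℝ), Real.exp_nat_mul, ENNReal.ofReal_pow (Real.exp_pos _).le,
      show Real.exp (-1) = 32 * δ by rw [hδ]; ring, ENNReal.ofReal_mul (by norm_num)]
    norm_num
  exact hexp ▸ measure_exists_isLatticeAnimal_sum_lt_le h01 hind
    (ENNReal.ofReal_le_one.mpr hδ1.le) hzero hs
end

section
/- Let G be a locally finite connected simple graph, let τ be a function assigning to each edge of G a nonnegative real number, and for a path γ in G let t(γ) denote the sum of τ over the edges of γ. Let v and w be two vertices of G, and suppose there exist c > 0 and an integer N such that every self-avoiding path γ starting at v with at least N edges satisfies t(γ) ≥ c·(number of edges of γ). Then the infimum T(v, w) := inf{t(γ) : γ a self-avoiding path from v to w} is attained: there exists a self-avoiding path ρ from v to w with t(ρ) = T(v, w). -/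
/-- Let `G` be a locally finite connected simple graph with nonnegative
edge weights `τ`, and write `t(γ)` for the sum of `τ` over the edges of a walk `γ`.  Suppose
that for some `c > 0` and `N : ℕ`, every self-avoiding path starting at `v` with at least `N`
edges satisfies `t(γ) ≥ c · length(γ)`.  Then the first-passage time
`T(v,w) = inf {t(γ) : γ self-avoiding path from v to w}` is attained by some self-avoiding
path `ρ` from `v` to `w`. -/
theorem stmt10 {V : Type*} (G : SimpleGraph V)
    (hfin : ∀ u : V, (G.neighborSet u).Finite)
    (hconn : G.Connected)
    (τ : Sym2 V → ℝ) (hτ : ∀ e, 0 ≤ τ e)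
    (v w : V) (c : ℝ) (hc : 0 < c) (N : ℕ)
    (hlin : ∀ (u : V) (γ : G.Walk v u), γ.IsPath → N ≤ γ.length →
      c * γ.length ≤ (γ.edges.map τ).sum) :
    ∃ ρ : G.Walk v w, ρ.IsPath ∧
      ∀ γ : G.Walk v w, γ.IsPath → (ρ.edges.map τ).sum ≤ (γ.edges.map τ).sum := by
  classical
  have : G.LocallyFinite := fun u => (hfin u).fintype
  obtain ⟨γ₀⟩ := hconn v w
  set p₀ : G.Walk v w := (γ₀.toPath : G.Path v w).val with hp₀def
  have hp₀ : p₀.IsPath := γ₀.toPath.2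
  set t₀ : ℝ := (p₀.edges.map τ).sum with ht₀
  have tnn : ∀ {u : V} (γ : G.Walk v u), 0 ≤ (γ.edges.map τ).sum := by
    intro u γ
    apply List.sum_nonneg
    intro x hx
    obtain ⟨e, _, rfl⟩ := List.mem_map.1 hx
    exact hτ e
  set L : ℕ := max N (⌈t₀ / c⌉₊ + 1) with hLdef
  set S : Set (G.Walk v w) := {γ | γ.IsPath ∧ γ.length < L + 1} with hSdef
  have hSfin : S.Finite := by
    apply Set.Finite.subset (Set.toFinite {γ : G.Walk v w | γ.length < L + 1})
    intro γ hγ; exact hγ.2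
  -- bound on length from t: if N ≤ length then length ≤ ⌈t/c⌉
  have hlen_bound : ∀ γ : G.Walk v w, γ.IsPath → γ.length < L + 1 ∨
      c * (L + 1 : ℕ) ≤ (γ.edges.map τ).sum := by
    intro γ hγ
    by_cases h : γ.length < L + 1
    · exact Or.inl h
    · right
      push_neg at h
      have hN : N ≤ γ.length := le_trans (le_trans (le_max_left _ _) (Nat.le_succ L)) h
      calc c * (L + 1 : ℕ) ≤ c * γ.length := by
            apply mul_le_mul_of_nonneg_left _ hc.le
            exact_mod_cast h
        _ ≤ _ := hlin w γ hγ hN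
  have hp₀S : p₀ ∈ S := by
    refine ⟨hp₀, ?_⟩
    by_cases h : p₀.length < N
    · exact lt_of_lt_of_le h (le_trans (le_max_left _ _) (Nat.le_succ L))
    · push_neg at h
      have h1 : c * p₀.length ≤ t₀ := hlin w p₀ hp₀ h
      have h2 : (p₀.length : ℝ) ≤ t₀ / c := (le_div_iff₀' hc).2 h1
      have h3 : p₀.length ≤ ⌈t₀ / c⌉₊ := by
        have := le_trans h2 (Nat.le_ceil (t₀ / c))
        exact_mod_cast this
      omega
  obtain ⟨ρ, hρS, hρmin⟩ := Set.exists_min_image S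
    (fun γ => (γ.edges.map τ).sum) hSfin ⟨p₀, hp₀S⟩
  refine ⟨ρ, hρS.1, ?_⟩
  intro γ hγ
  rcases hlen_bound γ hγ with h | h
  · exact hρmin γ ⟨hγ, h⟩
  · have hρt : (ρ.edges.map τ).sum ≤ t₀ := hρmin p₀ hp₀S
    have hceil : t₀ ≤ c * ⌈t₀ / c⌉₊ := by
      have := Nat.le_ceil (t₀ / c)
      calc t₀ = c * (t₀ / c) := by field_simp
        _ ≤ c * ⌈t₀ / c⌉₊ := mul_le_mul_of_nonneg_left this hc.le
    have hLc : c * ⌈t₀ / c⌉₊ ≤ c * (L + 1 : ℕ) := by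
      apply mul_le_mul_of_nonneg_left _ hc.le
      have : ⌈t₀ / c⌉₊ ≤ L + 1 := by omega
      exact_mod_cast this
    linarith
end
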